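/- Let T = (Q, Σ, δ) be an S-automaton such that all orbital graphs T ∘ ξ for ξ ∈ Σ^ω fall into finitely many isomorphism classes (as rooted edge-labeled directed graphs) and each is finite. Then two state sequences p, q ∈ Q⁺ induce the same partial map on Σ^ω if and only if they induce the same partial transformation on the finite disjoint union of representatives of these orbital graphs (acting by following edge labels); consequently S(T) embeds into the finite monoid of partial transformations of this finite vertex set and is finite. -/
import Mathlib


variable {Q A : Type*}

/-- The (partial) state reached after reading the first `n` letters of `ξ` from state `q`
in the deterministic partial automaton `δ`. -/
def pstate (δ : Q → A → Option (A × Q)) (ξ : ℕ → A) (q : Q) : ℕ → Option Q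
  | 0 => some q
  | n + 1 => (pstate δ ξ q n).bind fun s => (δ s (ξ n)).map Prod.snd

/-- The (partial) output letter at position `n` when reading `ξ` from state `q`. -/
def pout (δ : Q → A → Option (A × Q)) (ξ : ℕ → A) (q : Q) (n : ℕ) : Option A :=
  (pstate δ ξ q n).bind fun s => (δ s (ξ n)).map Prod.fst

open Classical in
/-- The partial action of a state `q` on an infinite word `ξ`. -/
noncomputable def pact (δ : Q → A → Option (A × Q)) (q : Q) (ξ : ℕ → A) : Option (ℕ → A) :=
  if h : ∀ n, (pout δ ξ q n).isSome then some fun n => (pout δ ξ q n).get (h n) else none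

/-- The partial action of a state sequence `q_n … q_1` (rightmost acting first). -/
noncomputable def pactW (δ : Q → A → Option (A × Q)) : List Q → (ℕ → A) → Option (ℕ → A)
  | [], ξ => some ξ
  | q :: w, ξ => (pactW δ w ξ).bind (pact δ q)

/-- The orbit `Q* ∘ ξ` of an infinite word. -/
def orbitP (δ : Q → A → Option (A × Q)) (ξ : ℕ → A) : Set (ℕ → A) :=
  {η | ∃ w : List Q, pactW δ w ξ = some η}

/-- The semigroup generated by the automaton: all partial maps on infinite words induced by
nonempty state sequences. -/
def sgpP (δ : Q → A → Option (A × Q)) : Set ((ℕ → A) → Option (ℕ → A)) :=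
  {F | ∃ w : List Q, w ≠ [] ∧ F = pactW δ w}

/-- An isomorphism of the rooted edge-labeled orbital graphs `T ∘ ξ` and `T ∘ ξ'`: a
root-preserving bijection of the orbits commuting with the (partial) edge maps `q ∘`. -/
def OrbIso (δ : Q → A → Option (A × Q)) (ξ ξ' : ℕ → A) : Prop :=
  ∃ φ : (ℕ → A) → (ℕ → A), φ ξ = ξ' ∧ Set.BijOn φ (orbitP δ ξ) (orbitP δ ξ') ∧
    ∀ η ∈ orbitP δ ξ, ∀ s : Q, (pact δ s η).map φ = pact δ s (φ η)

lemma pactW_append (δ : Q → A → Option (A × Q)) (a b : List Q) (ξ : ℕ → A) :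
    pactW δ (a ++ b) ξ = (pactW δ b ξ).bind (pactW δ a) := by
  induction a with
  | nil => cases h : pactW δ b ξ <;> simp [pactW, h]
  | cons q a ih => simp [pactW, ih, Option.bind_assoc]

lemma orbit_closed (δ : Q → A → Option (A × Q)) {ξ η η' : ℕ → A} {w : List Q}
    (hη : η ∈ orbitP δ ξ) (h : pactW δ w η = some η') : η' ∈ orbitP δ ξ := by
  obtain ⟨u, hu⟩ := hη
  exact ⟨w ++ u, by rw [pactW_append, hu]; exact h⟩

lemma intertwineW (δ : Q → A → Option (A × Q)) {ξ : ℕ → A} {φ : (ℕ → A) → (ℕ → A)}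
    (hcomm : ∀ η ∈ orbitP δ ξ, ∀ s : Q, (pact δ s η).map φ = pact δ s (φ η))
    (w : List Q) (η : ℕ → A) (hη : η ∈ orbitP δ ξ) :
    (pactW δ w η).map φ = pactW δ w (φ η) := by
  induction w with
  | nil => rfl
  | cons s w ih =>
    show ((pactW δ w η).bind (pact δ s)).map φ = (pactW δ w (φ η)).bind (pact δ s)
    rw [← ih]
    cases hw : pactW δ w η with
    | none => rfl
    | some η' =>
      have hη' : η' ∈ orbitP δ ξ := orbit_closed δ hη hw
      simpa using hcomm η' hη' s

/-- Suppose every orbital graph of the `S`-automaton is isomorphic to one of the finitely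
many finite orbital graphs `T ∘ ξs i`. Then two nonempty state sequences induce the same
partial map on ω-words iff they induce the same partial transformation on the (finite)
disjoint union of these representative orbital graphs; consequently the generated semigroup
embeds in the monoid of partial transformations of a finite set and is finite. -/
theorem stmt19 [Fintype Q] [Fintype A] (δ : Q → A → Option (A × Q))
    (n : ℕ) (ξs : Fin n → (ℕ → A))
    (hfin : ∀ i, (orbitP δ (ξs i)).Finite)
    (hrep : ∀ ξ : ℕ → A, ∃ i, OrbIso δ ξ (ξs i)) :
    (∀ p q : List Q, p ≠ [] → q ≠ [] →
      (pactW δ p = pactW δ q ↔ ∀ i, ∀ η ∈ orbitP δ (ξs i), pactW δ p η = pactW δ q η)) ∧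
    (sgpP δ).Finite := by
  have key : ∀ p q : List Q,
      (∀ i, ∀ η ∈ orbitP δ (ξs i), pactW δ p η = pactW δ q η) →
      pactW δ p = pactW δ q := by
    intro p q h
    funext ξ
    obtain ⟨i, φ, hφξ, hbij, hcomm⟩ := hrep ξ
    have hp := intertwineW δ hcomm p ξ ⟨[], rfl⟩
    have hq := intertwineW δ hcomm q ξ ⟨[], rfl⟩
    rw [hφξ] at hp hq
    have hroot : ξs i ∈ orbitP δ (ξs i) := ⟨[], rfl⟩
    have hmap : (pactW δ p ξ).map φ = (pactW δ q ξ).map φ := by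
      rw [hp, hq, h i (ξs i) hroot]
    cases hP : pactW δ p ξ with
    | none =>
      cases hQ : pactW δ q ξ with
      | none => rfl
      | some b => rw [hP, hQ] at hmap; simp at hmap
    | some a =>
      cases hQ : pactW δ q ξ with
      | none => rw [hP, hQ] at hmap; simp at hmap
      | some b =>
        rw [hP, hQ] at hmap
        simp only [Option.map_some, Option.some.injEq] at hmap
        have ha : a ∈ orbitP δ ξ := ⟨p, hP⟩
        have hb : b ∈ orbitP δ ξ := ⟨q, hQ⟩
        rw [hbij.injOn ha hb hmap]
  constructor
  · intro p q _ _
    constructor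
    · intro h i η _; rw [h]
    · exact key p q
  · have hSfin : (⋃ i, orbitP δ (ξs i)).Finite := Set.finite_iUnion hfin
    set S := ⋃ i, orbitP δ (ξs i) with hSdef
    have hT : (insert none (Option.some '' S) : Set (Option (ℕ → A))).Finite :=
      (hSfin.image _).insert _
    haveI : Finite ↥S := hSfin.to_subtype
    have hpi : (Set.pi Set.univ fun _ : ↥S =>
        (insert none (Option.some '' S) : Set (Option (ℕ → A)))).Finite :=
      Set.Finite.pi fun _ => hT
    apply Set.Finite.of_finite_image (f := fun F (η : ↥S) => F η.1)
    · apply hpi.subset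
      rintro g ⟨F, ⟨w, hw, rfl⟩, rfl⟩
      intro η _
      cases hF : pactW δ w η.1 with
      | none => simp [hF]
      | some η' =>
        right
        refine ⟨η', ?_, by simp [hF]⟩
        obtain ⟨si, ⟨i, rfl⟩, hi⟩ := η.2
        exact Set.mem_iUnion.mpr ⟨i, orbit_closed δ hi hF⟩
    · rintro F ⟨p, hp, rfl⟩ G ⟨q, hq, rfl⟩ hFG
      exact key p q fun i η hη =>
        congrFun hFG ⟨η, Set.mem_iUnion.mpr ⟨i, hη⟩⟩
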